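/- arXiv:1803.04516 — 2 statements merged into one kernel-verified Lean document; each statement's English description precedes it below -/
import Mathlib

section
/- Let n ≥ 2, b = 1, and let c > 2 and d > 1 be real with λ = c − d ≠ 0, and let Q be the corresponding n×n tridiagonal matrix. Then Q is invertible, the sequence u_i = β_{i−1} (i = 1, …, n) is positive and strictly increasing, the sequence v_i = β_{n−i} / (d β_{n−1} − β_{n−2}) (i = 1, …, n) is positive and strictly decreasing, and every entry of Q^{-1} is positive. -/
/-- The sequence β₀ = 1, β₁ = d, βᵢ = c βᵢ₋₁ − βᵢ₋₂. -/
noncomputable def beta (c d : ℝ) : ℕ → ℝ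
  | 0 => 1
  | 1 => d
  | i + 2 => c * beta c d (i + 1) - beta c d i

/-- The n×n symmetric tridiagonal matrix with diagonal (d, c, …, c, d) and
off-diagonal entries −b. -/
noncomputable def triQ (n : ℕ) (b c d : ℝ) : Matrix (Fin n) (Fin n) ℝ :=
  Matrix.of fun i j =>
    if i = j then (if (i : ℕ) = 0 ∨ (i : ℕ) = n - 1 then d else c)
    else if (i : ℕ) + 1 = (j : ℕ) ∨ (j : ℕ) + 1 = (i : ℕ) then -b else 0

/-!
Away from the diagonal, each column of the kernel `β_{min(i,j)} β_{n-1-max(i,j)}` satisfies the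
three-term recurrence of `β` (read forwards above the diagonal, backwards below it), and the first
and last rows of `Q` are matched by `β₀ = 1`, `β₁ = d`. On the diagonal the defect is the discrete
Wronskian `β_{k+1} β_{l+1} - β_k β_l`, which depends only on `k + l` and so equals
`D = d β_{n-1} - β_{n-2}` at every diagonal entry. Hence `Q⁻¹ = D⁻¹ • kernel`, and all positivity
claims reduce to `β` being positive and increasing, which holds since `c ≥ 2` and `d > 1`.
-/

section Beta

variable (c d : ℝ)

lemma beta_add_two (i : ℕ) : beta c d (i + 2) = c * beta c d (i + 1) - beta c d i := rfl

lemma beta_wronskian (k l : ℕ) :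
    beta c d (k + 1) * beta c d (l + 1) - beta c d k * beta c d l =
      d * beta c d (k + l + 1) - beta c d (k + l) := by
  induction k generalizing l with
  | zero => simp [beta]
  | succ k ih =>
    have h := ih (l + 1)
    rw [← Nat.add_assoc] at h
    rw [Nat.add_right_comm k 1 l, ← h, beta_add_two c d k, beta_add_two c d l]
    ring

variable {c d}

lemma beta_pos_and_lt_succ (hc : 2 ≤ c) (hd : 1 < d) (i : ℕ) :
    0 < beta c d i ∧ beta c d i < beta c d (i + 1) := by
  induction i with
  | zero => exact ⟨one_pos, hd⟩
  | succ i ih =>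
    have hsucc := ih.1.trans ih.2
    refine ⟨hsucc, ?_⟩
    rw [beta_add_two]
    nlinarith [mul_le_mul_of_nonneg_right hc hsucc.le]

lemma beta_pos (hc : 2 ≤ c) (hd : 1 < d) (i : ℕ) : 0 < beta c d i :=
  (beta_pos_and_lt_succ hc hd i).1

lemma beta_strictMono (hc : 2 ≤ c) (hd : 1 < d) : StrictMono (beta c d) :=
  strictMono_nat_of_lt_succ fun i => (beta_pos_and_lt_succ hc hd i).2

end Beta

noncomputable def greenKernel (c d : ℝ) (N i j : ℕ) : ℝ :=
  beta c d (min i j) * beta c d (N - max i j)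

section GreenKernel

variable {c d : ℝ} {N i j : ℕ}

lemma greenKernel_of_le (h : i ≤ j) : greenKernel c d N i j = beta c d i * beta c d (N - j) := by
  rw [greenKernel, min_eq_left h, max_eq_right h]

lemma greenKernel_of_ge (h : j ≤ i) : greenKernel c d N i j = beta c d j * beta c d (N - i) := by
  rw [greenKernel, min_eq_right h, max_eq_left h]

lemma greenKernel_row_first :
    d * greenKernel c d (N + 1) 0 j - greenKernel c d (N + 1) 1 j =
      if 0 = j then d * beta c d (N + 1) - beta c d N else 0 := by
  rcases j with _ | j
  · simp [greenKernel, beta]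
  · rw [greenKernel_of_le (Nat.zero_le _), greenKernel_of_le (by omega), if_neg (by omega)]
    simp [beta]

lemma greenKernel_row_interior (hi : i + 2 ≤ N + 1) :
    c * greenKernel c d (N + 1) (i + 1) j - greenKernel c d (N + 1) (i + 2) j
        - greenKernel c d (N + 1) i j =
      if i + 1 = j then d * beta c d (N + 1) - beta c d N else 0 := by
  obtain ⟨r, hr⟩ : ∃ r, N + 1 = i + 2 + r := ⟨N + 1 - (i + 2), by omega⟩
  rcases lt_trichotomy j (i + 1) with hj | rfl | hj
  · rw [greenKernel_of_ge (by omega), greenKernel_of_ge (by omega), greenKernel_of_ge (by omega),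
      if_neg hj.ne', hr, show i + 2 + r - i = r + 2 by omega,
      show i + 2 + r - (i + 1) = r + 1 by omega, show i + 2 + r - (i + 2) = r by omega, beta_add_two]
    ring
  · rw [greenKernel_of_le le_rfl, greenKernel_of_ge (by omega), greenKernel_of_le (by omega),
      if_pos rfl, hr, show i + 2 + r - (i + 1) = r + 1 by omega,
      show i + 2 + r - (i + 2) = r by omega, show N = i + 1 + r by omega, show i + 2 + r = i + 1 + r + 1 by omega, ← beta_wronskian,
      beta_add_two]
    ring
  · rw [greenKernel_of_le (by omega), greenKernel_of_le (by omega), greenKernel_of_le (by omega),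
      if_neg hj.ne, beta_add_two]
    ring

lemma greenKernel_row_last (hj : j ≤ N + 1) :
    d * greenKernel c d (N + 1) (N + 1) j - greenKernel c d (N + 1) N j =
      if N + 1 = j then d * beta c d (N + 1) - beta c d N else 0 := by
  rcases hj.lt_or_eq with hj | rfl
  · rw [greenKernel_of_ge hj.le, greenKernel_of_ge (by omega), if_neg hj.ne',
      show N + 1 - N = 1 by omega, Nat.sub_self]
    simp only [beta]
    ring
  · rw [greenKernel_of_le le_rfl, greenKernel_of_le (by omega), if_pos rfl]
    simp [beta]

end GreenKernel

lemma triQ_mul_of_apply (n : ℕ) (b c d : ℝ) (g : ℕ → ℕ → ℝ) (i j : Fin n) :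
    (triQ n b c d * Matrix.of fun k l : Fin n => g k l) i j =
      (if (i : ℕ) = 0 ∨ (i : ℕ) = n - 1 then d else c) * g i j
        - b * (if (i : ℕ) + 1 < n then g (i + 1) j else 0)
        - b * (if 0 < (i : ℕ) then g (i - 1) j else 0) := by
  set q : ℕ → ℝ := fun k =>
    (if (i : ℕ) = k then (if (i : ℕ) = 0 ∨ (i : ℕ) = n - 1 then d else c) else 0)
      + (if (i : ℕ) + 1 = k then -b else 0)
      + (if 0 < (i : ℕ) then (if (i : ℕ) - 1 = k then -b else 0) else 0)
  have hq : ∀ k : Fin n, triQ n b c d i k = q k := by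
    intro k
    simp only [q, triQ, Matrix.of_apply, Fin.ext_iff]
    split_ifs <;> first | omega | simp
  simp only [Matrix.mul_apply, hq, Matrix.of_apply]
  rw [Fin.sum_univ_eq_sum_range (fun k => q k * g k j)]
  simp only [q, add_mul, Finset.sum_add_distrib, ite_mul, zero_mul, Finset.sum_ite_irrel,
    Finset.sum_const_zero, Finset.sum_ite_eq, Finset.mem_range, i.isLt]
  split_ifs <;> first | omega | ring

lemma triQ_mul_greenKernel (N : ℕ) (c d : ℝ) :
    triQ (N + 2) 1 c d * Matrix.of (fun i j : Fin (N + 2) => greenKernel c d (N + 1) i j) =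
      (d * beta c d (N + 1) - beta c d N) • 1 := by
  ext ⟨i, hi⟩ ⟨j, hj⟩
  rw [triQ_mul_of_apply, Matrix.smul_apply, Matrix.one_apply]
  simp only [Fin.mk.injEq, one_mul, smul_eq_mul, mul_ite, mul_one, mul_zero]
  rcases i with _ | i
  · simpa using greenKernel_row_first (c := c) (d := d) (N := N) (j := j)
  obtain hi | rfl : i + 1 < N + 1 ∨ N = i := by omega
  · have := greenKernel_row_interior (c := c) (d := d) (j := j) (show i + 2 ≤ N + 1 by omega)
    simpa [show i ≠ N by omega, show i + 1 + 1 < N + 2 by omega] using this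
  · have := greenKernel_row_last (c := c) (d := d) (show j ≤ N + 1 by omega)
    simpa using this

/-- With 0-based indices, entry `(i, j)` is `u_{min(i,j)+1} v_{max(i,j)+1}` in the paper's
notation. -/
noncomputable def triQInv (n : ℕ) (c d : ℝ) : Matrix (Fin n) (Fin n) ℝ :=
  (d * beta c d (n - 1) - beta c d (n - 2))⁻¹ •
    Matrix.of fun i j : Fin n => greenKernel c d (n - 1) i j

lemma triQ_denom_pos {c d : ℝ} (hc : 2 ≤ c) (hd : 1 < d) (n : ℕ) :
    0 < d * beta c d (n - 1) - beta c d (n - 2) := by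
  have hle := (beta_strictMono hc hd).monotone (show n - 2 ≤ n - 1 by omega)
  nlinarith [mul_lt_mul_of_pos_right hd (beta_pos hc hd (n - 1))]

lemma triQ_mul_triQInv {n : ℕ} {c d : ℝ} (hn : 2 ≤ n)
    (hD : d * beta c d (n - 1) - beta c d (n - 2) ≠ 0) : triQ n 1 c d * triQInv n c d = 1 := by
  obtain ⟨N, rfl⟩ := Nat.exists_eq_add_of_le' hn
  rw [triQInv]
  rw [show N + 2 - 1 = N + 1 by omega, show N + 2 - 2 = N by omega] at hD ⊢
  rw [Matrix.mul_smul, triQ_mul_greenKernel, smul_smul, inv_mul_cancel₀ hD, one_smul]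

theorem triQ_inv_entries_pos_general (n : ℕ) (hn : 2 ≤ n) (c d : ℝ) (hc : 2 < c) (hd : 1 < d) :
    IsUnit (triQ n 1 c d) ∧
    (∀ i : Fin n, 0 < beta c d (i : ℕ)) ∧
    (∀ i j : Fin n, i < j → beta c d (i : ℕ) < beta c d (j : ℕ)) ∧
    (∀ i : Fin n,
      0 < beta c d (n - 1 - (i : ℕ)) / (d * beta c d (n - 1) - beta c d (n - 2))) ∧
    (∀ i j : Fin n, i < j →
      beta c d (n - 1 - (j : ℕ)) / (d * beta c d (n - 1) - beta c d (n - 2)) <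
        beta c d (n - 1 - (i : ℕ)) / (d * beta c d (n - 1) - beta c d (n - 2))) ∧
    (∀ i j : Fin n, 0 < (triQ n 1 c d)⁻¹ i j) := by
  have hpos := beta_pos hc.le hd
  have hmono := beta_strictMono hc.le hd
  have hD := triQ_denom_pos hc.le hd n
  have hinv := triQ_mul_triQInv hn hD.ne'
  refine ⟨(Matrix.isUnit_iff_isUnit_det _).mpr (Matrix.isUnit_det_of_right_inverse hinv),
    fun i => hpos i, fun i j hij => hmono hij, fun i => div_pos (hpos _) hD,
    fun i j hij => div_lt_div_of_pos_right (hmono (by omega)) hD, fun i j => ?_⟩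
  rw [Matrix.inv_eq_right_inv hinv, triQInv, Matrix.smul_apply, Matrix.of_apply, smul_eq_mul]
  exact mul_pos (inv_pos.mpr hD) (mul_pos (hpos _) (hpos _))

/-- Property: for b = 1, c > 2, d > 1, Q is invertible, the
sequence uᵢ = β_{i−1} is positive and strictly increasing, the sequence
vᵢ = β_{n−i}/(d β_{n−1} − β_{n−2}) is positive and strictly decreasing, and all
entries of Q⁻¹ are positive. -/
theorem triQ_inv_entries_pos (n : ℕ) (hn : 2 ≤ n) (c d : ℝ) (hc : 2 < c) (hd : 1 < d)
    (hlam : c - d ≠ 0) :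
    IsUnit (triQ n 1 c d) ∧
    (∀ i : Fin n, 0 < beta c d (i : ℕ)) ∧
    (∀ i j : Fin n, i < j → beta c d (i : ℕ) < beta c d (j : ℕ)) ∧
    (∀ i : Fin n,
      0 < beta c d (n - 1 - (i : ℕ)) / (d * beta c d (n - 1) - beta c d (n - 2))) ∧
    (∀ i j : Fin n, i < j →
      beta c d (n - 1 - (j : ℕ)) / (d * beta c d (n - 1) - beta c d (n - 2)) <
        beta c d (n - 1 - (i : ℕ)) / (d * beta c d (n - 1) - beta c d (n - 2))) ∧
    (∀ i j : Fin n, 0 < (triQ n 1 c d)⁻¹ i j) :=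
  triQ_inv_entries_pos_general n hn c d hc hd
end

section
/- Let n ≥ 2, b ∈ {1, −1}, c = 2 and d be real with λ = 2 − d satisfying λ ≠ 0, λ ≠ 1 and λ ≠ (n+1)/(n−1), and let Q be the corresponding n×n tridiagonal matrix. Then trace(Q^{-1}) = n { n − nλ + λ + (1−λ)²(n−1)(n−2)/6 } / [ (1−λ){ (1−λ)(n−1) + 2 } ]. -/
open Matrix Finset

lemma trace_inv_conj_of_mul_self_eq_one {m α : Type*} [Fintype m] [DecidableEq m] [CommRing α]
    {S : Matrix m m α} (hS : S * S = 1) (A : Matrix m m α) :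
    trace (S * A * S)⁻¹ = trace A⁻¹ := by
  rw [Matrix.mul_inv_rev, Matrix.mul_inv_rev, inv_eq_left_inv hS, trace_mul_comm,
    Matrix.mul_assoc, hS, Matrix.mul_one]

lemma sum_range_quadratic (a b c : ℝ) (n : ℕ) :
    ∑ i ∈ range n, (a + b * i + c * i ^ 2) =
      n * a + b * (n * (n - 1) / 2) + c * (n * (n - 1) * (2 * n - 1) / 6) := by
  induction n with
  | zero => simp
  | succ m ih => rw [sum_range_succ, ih]; push_cast; ring

section SignConjugation

variable {b : ℝ}

def signDiagonal (n : ℕ) (b : ℝ) : Matrix (Fin n) (Fin n) ℝ :=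
  diagonal fun i => b ^ (i : ℕ)

lemma signDiagonal_mul_self (n : ℕ) (hb : b ^ 2 = 1) :
    signDiagonal n b * signDiagonal n b = 1 := by
  rw [signDiagonal, diagonal_mul_diagonal, ← diagonal_one]
  congr 1; funext i
  rw [← pow_add, ← two_mul, pow_mul, hb, one_pow]

lemma pow_mul_pow_of_adjacent (hb : b ^ 2 = 1) {i j : ℕ} (h : i + 1 = j ∨ j + 1 = i) :
    b ^ i * b ^ j = b := by
  obtain ⟨k, hk⟩ : ∃ k, i + j = 2 * k + 1 := ⟨min i j, by omega⟩
  rw [← pow_add, hk, pow_succ, pow_mul, hb, one_pow, one_mul]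

lemma triQ_eq_signDiagonal_conj (n : ℕ) (hb : b ^ 2 = 1) (c d : ℝ) :
    triQ n b c d = signDiagonal n b * triQ n 1 c d * signDiagonal n b := by
  ext i j
  rw [signDiagonal, mul_diagonal, diagonal_mul]
  simp only [triQ, of_apply]
  by_cases hij : i = j
  · subst hij
    simp only [if_true]
    rw [mul_right_comm, ← pow_add, ← two_mul, pow_mul, hb, one_pow, one_mul]
  · simp only [if_neg hij]
    split_ifs with hadj
    · rw [mul_neg, mul_one, neg_mul, pow_mul_pow_of_adjacent hb hadj]
    · ring

lemma trace_inv_triQ_eq_trace_inv_triQ_one (n : ℕ) (hb : b ^ 2 = 1) (c d : ℝ) :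
    trace (triQ n b c d)⁻¹ = trace (triQ n 1 c d)⁻¹ := by
  rw [triQ_eq_signDiagonal_conj n hb,
    trace_inv_conj_of_mul_self_eq_one (signDiagonal_mul_self n hb)]

end SignConjugation

lemma triQ_mulVec_apply (n : ℕ) (b c d : ℝ) (x : ℕ → ℝ) (i : Fin n) :
    (triQ n b c d *ᵥ fun j => x j) i =
      (if (i : ℕ) = 0 ∨ (i : ℕ) = n - 1 then d else c) * x i
        - b * (if 0 < (i : ℕ) then x (i - 1) else 0)
        - b * (if (i : ℕ) + 1 < n then x (i + 1) else 0) := by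
  let row : ℕ → ℝ := fun j =>
    (if (i : ℕ) = j then (if (i : ℕ) = 0 ∨ (i : ℕ) = n - 1 then d else c) * x j else 0)
      - b * (if 0 < (i : ℕ) then (if (i : ℕ) - 1 = j then x j else 0) else 0)
      - b * (if (i : ℕ) + 1 = j then x j else 0)
  have hentry : ∀ j : Fin n, triQ n b c d i j * x j = row j := by
    intro j
    simp only [row, triQ, of_apply, Fin.ext_iff]
    split_ifs <;> first | omega | ring
  rw [mulVec, dotProduct, sum_congr rfl fun j _ => hentry j, Fin.sum_univ_eq_sum_range row]
  simp only [row, sum_sub_distrib, ← mul_sum, sum_ite_eq, sum_ite_irrel, sum_const_zero,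
    mem_range, i.isLt, (Nat.sub_le (i : ℕ) 1).trans_lt i.isLt, if_true]

section Green

variable (n : ℕ) (μ : ℝ)

def green (j k : ℕ) : ℝ :=
  (1 + (min j k : ℕ) * μ) * (1 + (n - 1 - (max j k : ℕ)) * μ)

variable {n μ}

lemma green_of_le {j k : ℕ} (h : j ≤ k) :
    green n μ j k = (1 + j * μ) * (1 + (n - 1 - k) * μ) := by
  rw [green, min_eq_left h, max_eq_right h]

lemma green_of_ge {j k : ℕ} (h : k ≤ j) :
    green n μ j k = (1 + k * μ) * (1 + (n - 1 - j) * μ) := by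
  rw [green, min_eq_right h, max_eq_left h]

lemma green_first_row (k : ℕ) :
    (1 + μ) * green n μ 0 k - green n μ 1 k = if 0 = k then μ * ((n - 1) * μ + 2) else 0 := by
  rcases Nat.eq_zero_or_pos k with rfl | hk
  · rw [if_pos rfl, green_of_le le_rfl, green_of_ge zero_le_one]; push_cast; ring
  · rw [if_neg hk.ne, green_of_le hk.le, green_of_le hk]; push_cast; ring

lemma green_interior_row (j k : ℕ) :
    2 * green n μ (j + 1) k - green n μ j k - green n μ (j + 2) k =
      if j + 1 = k then μ * ((n - 1) * μ + 2) else 0 := by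
  rcases lt_trichotomy (j + 1) k with h | rfl | h
  · rw [if_neg h.ne, green_of_le h.le, green_of_le (by omega),
      green_of_le (by omega : j + 2 ≤ k)]
    push_cast; ring
  · rw [if_pos rfl, green_of_le le_rfl, green_of_le (by omega), green_of_ge (by omega)]
    push_cast; ring
  · rw [if_neg h.ne', green_of_ge h.le, green_of_ge (by omega), green_of_ge (by omega)]
    push_cast; ring

lemma green_last_row {m k : ℕ} (hn : n = m + 2) (hk : k ≤ m + 1) :
    (1 + μ) * green n μ (m + 1) k - green n μ m k =
      if m + 1 = k then μ * ((n - 1) * μ + 2) else 0 := by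
  subst hn
  rcases hk.lt_or_eq with hk | rfl
  · rw [if_neg hk.ne', green_of_ge hk.le, green_of_ge (by omega)]; push_cast; ring
  · rw [if_pos rfl, green_of_le le_rfl, green_of_le (by omega)]; push_cast; ring

end Green

lemma green_recurrence {n : ℕ} (hn : 2 ≤ n) (d : ℝ) {i k : ℕ} (hi : i < n) (hk : k < n) :
    (if i = 0 ∨ i = n - 1 then d else 2) * green n (d - 1) i k
      - (if 0 < i then green n (d - 1) (i - 1) k else 0)
      - (if i + 1 < n then green n (d - 1) (i + 1) k else 0) =
      if i = k then (d - 1) * ((n - 1) * (d - 1) + 2) else 0 := by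
  obtain ⟨m, rfl⟩ : ∃ m, n = m + 2 := ⟨n - 2, by omega⟩
  rcases i with _ | j
  · rw [if_pos (Or.inl rfl), if_neg (lt_irrefl 0), if_pos (by omega)]
    linear_combination green_first_row (n := m + 2) (μ := d - 1) k
  · rw [if_pos (Nat.succ_pos j), Nat.add_sub_cancel]
    by_cases hlast : j = m
    · subst hlast
      rw [if_pos (Or.inr (by omega)), if_neg (by omega)]
      linear_combination green_last_row (μ := d - 1) rfl (by omega : k ≤ j + 1)
    · rw [if_neg (by omega), if_pos (by omega)]
      linear_combination green_interior_row (n := m + 2) (μ := d - 1) j k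

def greenMatrix (n : ℕ) (μ : ℝ) : Matrix (Fin n) (Fin n) ℝ :=
  of fun j k => green n μ j k

lemma triQ_mul_greenMatrix {n : ℕ} (hn : 2 ≤ n) (d : ℝ) :
    triQ n 1 2 d * greenMatrix n (d - 1) = ((d - 1) * ((n - 1) * (d - 1) + 2)) • 1 := by
  ext i k
  trans (triQ n 1 2 d *ᵥ fun j : Fin n => green n (d - 1) j k) i
  · rfl
  rw [triQ_mulVec_apply n 1 2 d (fun j => green n (d - 1) j k), one_mul, one_mul,
    green_recurrence hn d i.isLt k.isLt, Matrix.smul_apply, one_apply, smul_eq_mul, mul_ite,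
    mul_one, mul_zero]
  simp only [Fin.val_inj]

lemma trace_greenMatrix (n : ℕ) (μ : ℝ) :
    trace (greenMatrix n μ) = n * (1 + (n - 1) * μ) + μ ^ 2 * (n * (n - 1) * (n - 2) / 6) := by
  have hdiag : ∀ i ∈ range n,
      green n μ i i = (1 + (n - 1) * μ) + (n - 1) * μ ^ 2 * i + (-μ ^ 2) * i ^ 2 := by
    intro i _; rw [green_of_le le_rfl]; ring
  simp only [trace, diag_apply, greenMatrix, of_apply]
  rw [Fin.sum_univ_eq_sum_range (fun i => green n μ i i), sum_congr rfl hdiag,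
    sum_range_quadratic]
  ring

lemma inv_triQ_one_two {n : ℕ} (hn : 2 ≤ n) {d : ℝ}
    (hD : (d - 1) * ((n - 1) * (d - 1) + 2) ≠ 0) :
    (triQ n 1 2 d)⁻¹ = ((d - 1) * ((n - 1) * (d - 1) + 2))⁻¹ • greenMatrix n (d - 1) :=
  inv_eq_right_inv <| by
    rw [Matrix.mul_smul, triQ_mul_greenMatrix hn, smul_smul, inv_mul_cancel₀ hD, one_smul]

theorem trace_inv_c_eq_two_general (n : ℕ) (hn : 2 ≤ n) (b d : ℝ) (hb : b = 1 ∨ b = -1)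
    (h1 : (2 : ℝ) - d ≠ 1)
    (h2 : (2 : ℝ) - d ≠ ((n : ℝ) + 1) / ((n : ℝ) - 1)) :
    Matrix.trace (triQ n b 2 d)⁻¹ =
      (n : ℝ) * ((n : ℝ) - (n : ℝ) * (2 - d) + (2 - d)
          + (1 - (2 - d)) ^ 2 * ((n : ℝ) - 1) * ((n : ℝ) - 2) / 6) /
        ((1 - (2 - d)) * ((1 - (2 - d)) * ((n : ℝ) - 1) + 2)) := by
  have hb2 : b ^ 2 = 1 := by rcases hb with rfl | rfl <;> norm_num
  have hμ : d - 1 ≠ 0 := by contrapose! h1; linarith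
  have hn1 : (n : ℝ) - 1 ≠ 0 := by
    have : (2 : ℝ) ≤ n := by exact_mod_cast hn
    linarith
  have hF : ((n : ℝ) - 1) * (d - 1) + 2 ≠ 0 := by
    contrapose! h2
    rw [eq_div_iff hn1]
    linear_combination -h2
  rw [trace_inv_triQ_eq_trace_inv_triQ_one n hb2, inv_triQ_one_two hn (mul_ne_zero hμ hF),
    trace_smul, trace_greenMatrix, smul_eq_mul]
  field_simp
  ring

/-- Remark, trace, c = 2: with λ = 2 − d, λ ∉ {0, 1, (n+1)/(n−1)},
tr(Q⁻¹) = n{n − nλ + λ + (1−λ)²(n−1)(n−2)/6} / [(1−λ){(1−λ)(n−1) + 2}]. -/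
theorem trace_inv_c_eq_two (n : ℕ) (hn : 2 ≤ n) (b d : ℝ) (hb : b = 1 ∨ b = -1)
    (h0 : (2 : ℝ) - d ≠ 0) (h1 : (2 : ℝ) - d ≠ 1)
    (h2 : (2 : ℝ) - d ≠ ((n : ℝ) + 1) / ((n : ℝ) - 1)) :
    Matrix.trace (triQ n b 2 d)⁻¹ =
      (n : ℝ) * ((n : ℝ) - (n : ℝ) * (2 - d) + (2 - d)
          + (1 - (2 - d)) ^ 2 * ((n : ℝ) - 1) * ((n : ℝ) - 2) / 6) /
        ((1 - (2 - d)) * ((1 - (2 - d)) * ((n : ℝ) - 1) + 2)) :=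
  trace_inv_c_eq_two_general n hn b d hb h1 h2
end
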